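/- For the constellation O_M ⊂ ℝ³ consisting of M−1 points at the origin and one point (√((2/3)·M·E_s), 0, √(M·E_s/3)) on the boundary of the cone Υ, the ratio (Σᵢ s_{i,1})² / (M·Σᵢ ‖sᵢ‖² − ‖Σᵢ sᵢ‖²) equals exactly 2/(3(M−1)), attaining the lower bound for average optical power zero-crossing over all M-point constellations in Υ. -/

import Mathlib

def cone : Set (ℝ × ℝ × ℝ) :=
  {w | Real.sqrt (2 * (w.2.1 ^ 2 + w.2.2 ^ 2)) ≤ w.1}

noncomputable def nsq (w : ℝ × ℝ × ℝ) : ℝ := w.1 ^ 2 + w.2.1 ^ 2 + w.2.2 ^ 2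

/-! Inside Υ the transverse part of a vector is at most `1/√2` times its first coordinate, so by
Cauchy–Schwarz two vectors of Υ have inner product at least half the product of their first
coordinates. Summing over all pairs, with `S = ∑ tᵢ₁`, `Q = ∑ tᵢ₁²` and `N = ∑ ‖tᵢ‖²`, gives
`‖∑ tᵢ‖² ≥ S²/2 + N - Q/2`; together with `N ≤ 3Q/2` and `Q ≤ S²` this yields
`2 (M N - ‖∑ tᵢ‖²) ≤ 3 (M - 1) S²`. A single nonzero point on the boundary of Υ makes every one of
these inequalities an equality. -/

open Finset

def dot (u v : ℝ × ℝ × ℝ) : ℝ := u.1 * v.1 + u.2.1 * v.2.1 + u.2.2 * v.2.2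

lemma nsq_eq_dot (u : ℝ × ℝ × ℝ) : nsq u = dot u u := by
  simp only [nsq, dot, sq]

lemma nsq_zero : nsq 0 = 0 := by
  simp [nsq]

lemma nsq_sum {ι : Type*} (s : Finset ι) (t : ι → ℝ × ℝ × ℝ) :
    nsq (∑ i ∈ s, t i) = ∑ i ∈ s, ∑ j ∈ s, dot (t i) (t j) := by
  simp only [nsq, dot, Prod.fst_sum, Prod.snd_sum, sq, sum_mul_sum, ← sum_add_distrib]

lemma nsq_sum_le_card_mul {ι : Type*} (s : Finset ι) (t : ι → ℝ × ℝ × ℝ) :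
    nsq (∑ i ∈ s, t i) ≤ #s * ∑ i ∈ s, nsq (t i) := by
  simp only [nsq, Prod.fst_sum, Prod.snd_sum, sum_add_distrib, mul_add]
  linarith [sq_sum_le_card_mul_sum_sq (s := s) (f := fun i => (t i).1),
    sq_sum_le_card_mul_sum_sq (s := s) (f := fun i => (t i).2.1),
    sq_sum_le_card_mul_sum_sq (s := s) (f := fun i => (t i).2.2)]

lemma mem_cone_iff {w : ℝ × ℝ × ℝ} :
    w ∈ cone ↔ 0 ≤ w.1 ∧ 2 * (w.2.1 ^ 2 + w.2.2 ^ 2) ≤ w.1 ^ 2 := by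
  rw [cone, Set.mem_ofPred_eq, Real.sqrt_le_iff]

lemma nsq_le_of_mem_cone {w : ℝ × ℝ × ℝ} (hw : w ∈ cone) : nsq w ≤ 3 / 2 * w.1 ^ 2 := by
  rw [mem_cone_iff] at hw
  rw [nsq]
  linarith

lemma half_mul_le_dot_of_mem_cone {u v : ℝ × ℝ × ℝ} (hu : u ∈ cone) (hv : v ∈ cone) :
    u.1 * v.1 / 2 ≤ dot u v := by
  rw [mem_cone_iff] at hu hv
  have cauchy_schwarz : (u.2.1 * v.2.1 + u.2.2 * v.2.2) ^ 2 ≤ (u.1 * v.1 / 2) ^ 2 := by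
    nlinarith [sq_nonneg (u.2.1 * v.2.2 - u.2.2 * v.2.1),
      mul_le_mul hu.2 hv.2 (by positivity) (sq_nonneg u.1)]
  have hcross := (abs_le_of_sq_le_sq' cauchy_schwarz (by nlinarith [hu.1, hv.1])).1
  rw [dot]
  linarith

variable {ι : Type*} [Fintype ι]

lemma nsq_sum_ge_of_mem_cone {t : ι → ℝ × ℝ × ℝ} (ht : ∀ i, t i ∈ cone) :
    (∑ i, (t i).1) ^ 2 / 2 + ∑ i, nsq (t i) - (∑ i, (t i).1 ^ 2) / 2 ≤ nsq (∑ i, t i) := by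
  classical
  calc _ = ∑ i, ∑ j, ((t i).1 * (t j).1 / 2 +
          if i = j then nsq (t i) - (t i).1 ^ 2 / 2 else 0) := by
        simp only [sum_add_distrib, sum_ite_eq, mem_univ, if_true, ← sum_div, sum_mul_sum,
          sum_sub_distrib, sq]
        ring
    _ ≤ ∑ i, ∑ j, dot (t i) (t j) := by
        gcongr with i _ j _
        split_ifs with hij
        · subst hij
          rw [nsq_eq_dot]
          linarith
        · linarith [half_mul_le_dot_of_mem_cone (ht i) (ht j)]
    _ = nsq (∑ i, t i) := (nsq_sum _ _).symm

lemma two_mul_sub_le_of_mem_cone [Nonempty ι] {t : ι → ℝ × ℝ × ℝ} (ht : ∀ i, t i ∈ cone) :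
    2 * (Fintype.card ι * ∑ i, nsq (t i) - nsq (∑ i, t i)) ≤
      3 * (Fintype.card ι - 1) * (∑ i, (t i).1) ^ 2 := by
  have hM : (1 : ℝ) ≤ Fintype.card ι := by exact_mod_cast Fintype.card_pos
  have hpairs := nsq_sum_ge_of_mem_cone ht
  have hQS : ∑ i, (t i).1 ^ 2 ≤ (∑ i, (t i).1) ^ 2 :=
    sum_sq_le_sq_sum_of_nonneg fun i _ => (mem_cone_iff.1 (ht i)).1
  have hNQ : ∑ i, nsq (t i) ≤ 3 / 2 * ∑ i, (t i).1 ^ 2 := by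
    rw [mul_sum]
    exact sum_le_sum fun i _ => nsq_le_of_mem_cone (ht i)
  nlinarith [mul_le_mul_of_nonneg_left hNQ (sub_nonneg.2 hM),
    mul_le_mul_of_nonneg_left hQS (by linarith : (0 : ℝ) ≤ 3 * Fintype.card ι - 2)]

lemma div_le_sq_sum_fst_div_of_mem_cone (hM : 2 ≤ Fintype.card ι) {t : ι → ℝ × ℝ × ℝ}
    (ht : ∀ i, t i ∈ cone) (hD : Fintype.card ι * ∑ i, nsq (t i) - nsq (∑ i, t i) ≠ 0) :
    2 / (3 * ((Fintype.card ι : ℝ) - 1)) ≤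
      (∑ i, (t i).1) ^ 2 / (Fintype.card ι * ∑ i, nsq (t i) - nsq (∑ i, t i)) := by
  have : Nonempty ι := Fintype.card_pos_iff.1 (by omega)
  have hM' : (2 : ℝ) ≤ Fintype.card ι := by exact_mod_cast hM
  have hD_pos : 0 < Fintype.card ι * ∑ i, nsq (t i) - nsq (∑ i, t i) :=
    lt_of_le_of_ne (sub_nonneg.2 (nsq_sum_le_card_mul _ _)) hD.symm
  rw [div_le_div_iff₀ (by linarith) hD_pos]
  linarith [two_mul_sub_le_of_mem_cone ht]

lemma sq_sum_fst_div_of_eq_pi_single [DecidableEq ι] {t : ι → ℝ × ℝ × ℝ} {i : ι}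
    {p : ℝ × ℝ × ℝ} (ht : t = Pi.single i p) :
    (∑ j, (t j).1) ^ 2 / (Fintype.card ι * ∑ j, nsq (t j) - nsq (∑ j, t j)) =
      p.1 ^ 2 / ((Fintype.card ι - 1) * nsq p) := by
  have hnsq : ∀ j, nsq (t j) = (Pi.single i (nsq p) : ι → ℝ) j := by
    subst ht
    exact Pi.apply_single (fun _ => nsq) (fun _ => nsq_zero) i p
  simp only [hnsq]
  simp only [← Prod.fst_sum, ht, sum_pi_single', mem_univ, if_true]
  ring

theorem OM_attains_optical_bound (M : ℕ) (hM : 2 ≤ M) (Es : ℝ) (hEs : 0 < Es)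
    (s : Fin M → ℝ × ℝ × ℝ)
    (hdef : ∀ i : Fin M,
      s i = if (i : ℕ) = 0 then
        ((Real.sqrt ((2 / 3) * (M : ℝ) * Es), 0,
          Real.sqrt ((M : ℝ) * Es / 3)) : ℝ × ℝ × ℝ) else 0) :
    (∑ i, (s i).1) ^ 2 / ((M : ℝ) * (∑ i, nsq (s i)) - nsq (∑ i, s i)) =
      2 / (3 * ((M : ℝ) - 1)) ∧
    (∀ t : Fin M → ℝ × ℝ × ℝ, (∀ i, t i ∈ cone) →
      (M : ℝ) * (∑ i, nsq (t i)) - nsq (∑ i, t i) ≠ 0 →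
      2 / (3 * ((M : ℝ) - 1)) ≤
        (∑ i, (t i).1) ^ 2 / ((M : ℝ) * (∑ i, nsq (t i)) - nsq (∑ i, t i))) := by
  have : NeZero M := ⟨by omega⟩
  set p : ℝ × ℝ × ℝ := (√((2 / 3) * (M : ℝ) * Es), 0, √((M : ℝ) * Es / 3)) with hp
  have hs : s = Pi.single 0 p := funext fun i => by
    simp only [hdef, Pi.single_apply, Fin.val_eq_zero_iff]
  have hp1 : p.1 ^ 2 = 2 / 3 * M * Es := Real.sq_sqrt (by positivity)
  have hpn : nsq p = M * Es := by
    simp only [nsq, hp, Real.sq_sqrt (by positivity : (0 : ℝ) ≤ 2 / 3 * M * Es),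
      Real.sq_sqrt (by positivity : (0 : ℝ) ≤ M * Es / 3)]
    ring
  have hM1 : (M : ℝ) - 1 ≠ 0 := sub_ne_zero.2 (by norm_cast; omega)
  refine ⟨?_, fun t ht hD => ?_⟩
  · have h := sq_sum_fst_div_of_eq_pi_single hs
    rw [Fintype.card_fin] at h
    rw [h, hp1, hpn]
    field_simp
  · simpa using div_le_sq_sum_fst_div_of_mem_cone (by simpa using hM) ht (by simpa using hD)
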